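/- Let α > 0 and let Z be a real random variable on a probability space (Ω, F, P) whose left tail is regularly varying with index −α, i.e. P(Z < −u) > 0 for every u > 0 and for every λ > 0, lim_{u→∞} P(Z < −λu)/P(Z < −u) = λ^{−α}. Let I be a nonempty index set and (A_i)_{i∈I} a family of nonnegative random variables on (Ω, F, P), each A_i independent of Z, such that for some ε > 0 and C < ∞ one has E[A_i^{α+ε}] ≤ C for all i ∈ I. Then lim_{u→∞} sup_{i∈I} |P(A_i Z < −u)/P(Z < −u) − E[A_i^{α}]| = 0; that is, for every δ > 0 there exists u₀ such that for all u ≥ u₀ and all i ∈ I, |P(A_i Z < −u)/P(Z < −u) − E[A_i^{α}]| ≤ δ. -/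

import Mathlib

/-!
Conditioning on `A`, which is independent of `Z`, gives `P(A Z < -u) / P(Z < -u) = E[g_u(A)]` with
`g_u(a) = P(Z < -u/a) / P(Z < -u)`, and regular variation of the tail says `g_u(a) → a^α`.
Each `g_u` is monotone and the limit is continuous, so the convergence is uniform on `[0, M]`.
For `a > M`, Potter's bound `g_u(a) ≤ K a^(α+ε/2)`, obtained by iterating
`P(Z < -u/2) ≤ 2^(α+ε/2) P(Z < -u)`, is at most `K M^(-ε/2) a^(α+ε)`, whose expectation is
uniformly small by the moment bound.
-/

open MeasureTheory ProbabilityTheory Filter Set Topology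
open scoped NNReal ENNReal

lemma exists_finset_bracketing (a b : ℝ) {d : ℝ} (hd : 0 < d) :
    ∃ S : Finset ℝ, (∀ s ∈ S, s ∈ Icc a b) ∧ ∀ x ∈ Icc a b,
      (∃ s ∈ S, s ≤ x ∧ x - s < d) ∧ ∃ s ∈ S, x ≤ s ∧ s - x < d := by
  set N := ⌈(b - a) / d⌉₊
  set grid : ℕ → ℝ := fun k => min (a + k * d) b
  refine ⟨((Finset.range (N + 1)).image grid).filter (· ∈ Icc a b),
    fun s hs => (Finset.mem_filter.mp hs).2, fun x hx => ?_⟩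
  have hmem : ∀ k ≤ N, grid k ∈ Icc a b → grid k ∈
      ((Finset.range (N + 1)).image grid).filter (· ∈ Icc a b) := fun k hk hgk =>
    Finset.mem_filter.mpr ⟨Finset.mem_image_of_mem _ (Finset.mem_range.mpr (by omega)), hgk⟩
  have hxa : 0 ≤ (x - a) / d := div_nonneg (by linarith [hx.1]) hd.le
  have hxb : (x - a) / d ≤ (b - a) / d := by gcongr; exact hx.2
  constructor
  · set k := ⌊(x - a) / d⌋₊
    have hk : (k : ℝ) * d ≤ x - a := (le_div_iff₀ hd).mp (Nat.floor_le hxa)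
    have hk' : x - a < (k + 1) * d := (div_lt_iff₀ hd).mp (Nat.lt_floor_add_one _)
    have hgk : grid k = a + k * d := min_eq_left (by linarith [hx.2])
    refine ⟨grid k, hmem k ((Nat.floor_le_floor hxb).trans (Nat.floor_le_ceil _)) ?_, ?_, ?_⟩
    · rw [hgk]; constructor <;> nlinarith [hx.2, (Nat.cast_nonneg k : (0:ℝ) ≤ k)]
    · rw [hgk]; linarith
    · rw [hgk]; linarith
  · set k := ⌈(x - a) / d⌉₊
    have hk : x - a ≤ k * d := (div_le_iff₀ hd).mp (Nat.le_ceil _)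
    have hk' : (k : ℝ) * d < x - a + d := by
      have := Nat.ceil_lt_add_one hxa
      rwa [div_add_one hd.ne', lt_div_iff₀ hd] at this
    have hxg : x ≤ grid k := le_min (by linarith) hx.2
    refine ⟨grid k, hmem k (Nat.ceil_mono hxb) ⟨hx.1.trans hxg, min_le_right _ _⟩, hxg, ?_⟩
    linarith [min_le_left (a + k * d) b]

theorem tendstoUniformlyOn_Icc_of_monotoneOn {ι : Type*} {l : Filter ι} {g : ι → ℝ → ℝ}
    {f : ℝ → ℝ} {a b : ℝ} (hg : ∀ᶠ n in l, MonotoneOn (g n) (Icc a b))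
    (hf : ContinuousOn f (Icc a b)) (hlim : ∀ x ∈ Icc a b, Tendsto (g · x) l (𝓝 (f x))) :
    TendstoUniformlyOn g f l (Icc a b) := by
  rw [Metric.tendstoUniformlyOn_iff]
  intro δ hδ
  obtain ⟨d, hd, hfd⟩ := Metric.uniformContinuousOn_iff.mp
    (isCompact_Icc.uniformContinuousOn_of_continuous hf) (δ / 2) (half_pos hδ)
  obtain ⟨S, hSI, hS⟩ := exists_finset_bracketing a b hd
  have hgrid : ∀ᶠ n in l, ∀ s ∈ S, dist (g n s) (f s) < δ / 2 := (eventually_all_finset S).mpr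
    fun s hs => Metric.tendsto_nhds.mp (hlim s (hSI s hs)) _ (half_pos hδ)
  filter_upwards [hgrid, hg] with n hgrid hmono x hx
  obtain ⟨⟨s, hsS, hsx, hxs⟩, ⟨s', hs'S, hxs', hs'x⟩⟩ := hS x hx
  have hfs := hfd s (hSI s hsS) x hx (by rw [Real.dist_eq, abs_of_nonpos (by linarith)]; linarith)
  have hfs' := hfd s' (hSI s' hs'S) x hx
    (by rw [Real.dist_eq, abs_of_nonneg (by linarith)]; linarith)
  have hgs := hgrid s hsS
  have hgs' := hgrid s' hs'S
  rw [Real.dist_eq, abs_lt] at hfs hfs' hgs hgs' ⊢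
  -- monotonicity squeezes `g n x` between its values at the grid points `s ≤ x ≤ s'`
  have := hmono (hSI s hsS) hx hsx
  have := hmono hx (hSI s' hs'S) hxs'
  constructor <;> linarith

lemma integrable_rpow_of_le {μ : Measure ℝ} [IsFiniteMeasure μ] {p q : ℝ}
    (hμ : ∀ᵐ a ∂μ, 0 ≤ a) (hp : 0 ≤ p) (hpq : p ≤ q) (hq : Integrable (fun a : ℝ => a ^ q) μ) :
    Integrable (fun a : ℝ => a ^ p) μ := by
  refine (hq.add (integrable_const 1)).mono' (measurable_id.pow_const p).aestronglyMeasurable ?_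
  filter_upwards [hμ] with a ha
  rw [Real.norm_eq_abs, abs_of_nonneg (Real.rpow_nonneg ha p), Pi.add_apply]
  rcases le_total a 1 with h | h
  · linarith [Real.rpow_le_one ha h hp, Real.rpow_nonneg ha q]
  · linarith [Real.rpow_le_rpow_of_exponent_le h hpq]

lemma abs_integral_sub_integral_le {X : Type*} [MeasurableSpace X] {μ : Measure X}
    [IsProbabilityMeasure μ] {f g h : X → ℝ} {c : ℝ} (hf : Integrable f μ) (hg : Integrable g μ)
    (hh : Integrable h μ) (hfg : ∀ᵐ x ∂μ, |f x - g x| ≤ c + h x) :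
    |∫ x, f x ∂μ - ∫ x, g x ∂μ| ≤ c + ∫ x, h x ∂μ :=
  calc |∫ x, f x ∂μ - ∫ x, g x ∂μ| = |∫ x, (f x - g x) ∂μ| := by rw [integral_sub hf hg]
    _ ≤ ∫ x, |f x - g x| ∂μ := abs_integral_le_integral_abs
    _ ≤ ∫ x, (c + h x) ∂μ := integral_mono_ae (hf.sub hg).abs ((integrable_const c).add hh) hfg
    _ = c + ∫ x, h x ∂μ := by simp [integral_add (integrable_const c) hh]

lemma integrable_and_integral_le_of_lintegral_le {X : Type*} [MeasurableSpace X] {μ : Measure X}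
    {f : X → ℝ} (hf : AEStronglyMeasurable f μ) (hf0 : 0 ≤ᵐ[μ] f) {B : ℝ≥0∞} (hB : B ≠ ∞)
    (h : ∫⁻ x, ENNReal.ofReal (f x) ∂μ ≤ B) : Integrable f μ ∧ ∫ x, f x ∂μ ≤ B.toReal :=
  ⟨(lintegral_ofReal_ne_top_iff_integrable hf hf0).mp (ne_top_of_le_ne_top hB h),
    by rw [integral_eq_lintegral_of_nonneg_ae hf0 hf]; exact ENNReal.toReal_mono hB h⟩

def RegularlyVarying (t : ℝ → ℝ) (ρ : ℝ) : Prop :=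
  ∀ lam : ℝ, 0 < lam → Tendsto (fun u => t (lam * u) / t u) atTop (𝓝 (lam ^ ρ))

section Potter

variable {t : ℝ → ℝ} {α β u₁ : ℝ}

lemma RegularlyVarying.eventually_div_two_le (hrv : RegularlyVarying t (-α))
    (ht_pos : ∀ u, 0 < u → 0 < t u) (hαβ : α < β) :
    ∀ᶠ u in atTop, t (u / 2) ≤ 2 ^ β * t u := by
  have hlim : ((2 : ℝ)⁻¹) ^ (-α) < 2 ^ β := by
    rw [Real.inv_rpow zero_le_two, ← Real.rpow_neg zero_le_two, neg_neg]
    exact Real.rpow_lt_rpow_of_exponent_lt one_lt_two hαβ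
  filter_upwards [(hrv 2⁻¹ (by norm_num)).eventually_lt_const hlim, eventually_gt_atTop 0]
    with u hu hu0
  rw [div_lt_iff₀ (ht_pos u hu0), inv_mul_eq_div] at hu
  exact hu.le

lemma le_pow_mul_of_div_two_le {B : ℝ} (hstep : ∀ v, u₁ ≤ v → t (v / 2) ≤ B * t v)
    (hB : 0 ≤ B) (hu₁ : 0 < u₁) (u : ℝ) :
    ∀ n : ℕ, u₁ ≤ u / 2 ^ n → t (u / 2 ^ (n + 1)) ≤ B ^ (n + 1) * t u := by
  intro n
  induction n with
  | zero => simpa using hstep u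
  | succ n ih =>
    intro hn
    have hu : 0 ≤ u := ((div_pos_iff_of_pos_right (by positivity)).mp (hu₁.trans_le hn)).le
    have hn' : u₁ ≤ u / 2 ^ n := hn.trans
      (div_le_div_of_nonneg_left hu (by positivity) (pow_le_pow_right₀ one_le_two n.le_succ))
    calc t (u / 2 ^ (n + 1 + 1)) = t (u / 2 ^ (n + 1) / 2) := by rw [div_div, ← pow_succ]
      _ ≤ B * t (u / 2 ^ (n + 1)) := hstep _ hn
      _ ≤ B * (B ^ (n + 1) * t u) := mul_le_mul_of_nonneg_left (ih hn') hB
      _ = B ^ (n + 1 + 1) * t u := by ring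

lemma Antitone.le_rpow_mul_of_div_two_le (ht : Antitone t)
    (hstep : ∀ v, u₁ ≤ v → t (v / 2) ≤ 2 ^ β * t v) (hβ : 0 ≤ β) (hu₁ : 0 < u₁)
    {u a : ℝ} (htu : 0 ≤ t u) (ha : 1 ≤ a) (hua : u₁ ≤ u / a) :
    t (u / a) ≤ 2 ^ β * a ^ β * t u := by
  obtain ⟨n, hn, hn'⟩ := exists_nat_pow_near ha one_lt_two
  have hu : 0 ≤ u := ((div_pos_iff_of_pos_right (by linarith)).mp (hu₁.trans_le hua)).le
  calc t (u / a) ≤ t (u / 2 ^ (n + 1)) := ht (div_le_div_of_nonneg_left hu (by positivity) hn'.le)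
    _ ≤ (2 ^ β) ^ (n + 1) * t u :=
      le_pow_mul_of_div_two_le hstep (by positivity) hu₁ u n
        (hua.trans (div_le_div_of_nonneg_left hu (by positivity) hn))
    _ = 2 ^ β * ((2 : ℝ) ^ n) ^ β * t u := by
      rw [pow_succ', ← Real.rpow_natCast, ← Real.rpow_natCast, ← Real.rpow_mul zero_le_two,
        ← Real.rpow_mul zero_le_two, mul_comm β]
    _ ≤ 2 ^ β * a ^ β * t u := by gcongr

lemma exists_potter_bound (ht : Antitone t) (ht_pos : ∀ u, 0 < u → 0 < t u)
    (ht_le : ∀ x, t x ≤ 1) (hβ : 0 ≤ β) (hstep : ∀ᶠ u in atTop, t (u / 2) ≤ 2 ^ β * t u) :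
    ∃ K, 0 ≤ K ∧ ∀ᶠ u in atTop, ∀ a, 1 ≤ a → t (u / a) ≤ K * a ^ β * t u := by
  obtain ⟨u₁', hu₁'⟩ := eventually_atTop.mp hstep
  set u₁ := max u₁' 1
  have hu₁ : 0 < u₁ := zero_lt_one.trans_le (le_max_right _ _)
  have hstep' : ∀ v, u₁ ≤ v → t (v / 2) ≤ 2 ^ β * t v :=
    fun v hv => hu₁' v ((le_max_left _ _).trans hv)
  have htu₁ := ht_pos u₁ hu₁
  refine ⟨2 ^ β / t u₁, by positivity, ?_⟩
  filter_upwards [eventually_ge_atTop u₁] with u hu a ha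
  have htu := ht_pos u (hu₁.trans_le hu)
  rcases le_or_gt u₁ (u / a) with hua | hua
  · calc t (u / a) ≤ 2 ^ β * a ^ β * t u :=
          ht.le_rpow_mul_of_div_two_le hstep' hβ hu₁ htu.le ha hua
      _ ≤ 2 ^ β / t u₁ * a ^ β * t u := by
          gcongr; exact le_div_self (by positivity) htu₁ (ht_le u₁)
  · -- `u / a` lies below the doubling range, so we only know `t (u / a) ≤ 1`; compare with `t u₁`.
    have hu₁a : u / u₁ ≤ a := by
      rw [div_lt_iff₀ (zero_lt_one.trans_le ha)] at hua
      rw [div_le_iff₀ hu₁]; linarith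
    have hmid : t u₁ ≤ 2 ^ β * a ^ β * t u :=
      calc t u₁ = t (u / (u / u₁)) := by rw [div_div_cancel₀ (hu₁.trans_le hu).ne']
        _ ≤ 2 ^ β * (u / u₁) ^ β * t u :=
          ht.le_rpow_mul_of_div_two_le hstep' hβ hu₁ htu.le ((one_le_div hu₁).mpr hu)
            (by rw [div_div_cancel₀ (hu₁.trans_le hu).ne'])
        _ ≤ 2 ^ β * a ^ β * t u := by
          gcongr; exact (div_pos (hu₁.trans_le hu) hu₁).le
    calc t (u / a) ≤ 1 := ht_le _
      _ ≤ 2 ^ β * a ^ β * t u / t u₁ := (one_le_div htu₁).mpr hmid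
      _ = 2 ^ β / t u₁ * a ^ β * t u := by ring

end Potter

/-- For `t = leftTail P Z`, `a ≥ 0` and `u ≥ 0`, this is `P(a Z < -u)`. -/
noncomputable def scaledTail (t : ℝ → ℝ) (u a : ℝ) : ℝ := if 0 < a then t (u / a) else 0

section ScaledTail

variable {t : ℝ → ℝ} {α : ℝ}

lemma monotone_scaledTail (ht : Antitone t) (ht_pos : ∀ u, 0 < u → 0 < t u) {u : ℝ}
    (hu : 0 < u) : Monotone (scaledTail t u) := by
  intro a b hab
  unfold scaledTail
  by_cases ha : 0 < a
  · rw [if_pos ha, if_pos (ha.trans_le hab)]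
    exact ht (div_le_div_of_nonneg_left hu.le ha hab)
  · rw [if_neg ha]
    split_ifs with hb
    exacts [(ht_pos _ (div_pos hu hb)).le, le_rfl]

lemma RegularlyVarying.tendsto_scaledTail_div (hrv : RegularlyVarying t (-α)) (hα : 0 < α)
    {a : ℝ} (ha : 0 ≤ a) : Tendsto (fun u => scaledTail t u a / t u) atTop (𝓝 (a ^ α)) := by
  rcases ha.eq_or_lt with rfl | ha
  · simp [scaledTail, Real.zero_rpow hα.ne']
  · have h := hrv a⁻¹ (inv_pos.mpr ha)
    rw [Real.inv_rpow ha.le, ← Real.rpow_neg ha.le, neg_neg] at h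
    refine h.congr fun u => ?_
    rw [scaledTail, if_pos ha, inv_mul_eq_div]

lemma RegularlyVarying.tendstoUniformlyOn_scaledTail_div (hrv : RegularlyVarying t (-α))
    (hα : 0 < α) (ht : Antitone t) (ht_pos : ∀ u, 0 < u → 0 < t u) (M : ℝ) :
    TendstoUniformlyOn (fun u a => scaledTail t u a / t u) (· ^ α) atTop (Icc 0 M) := by
  refine tendstoUniformlyOn_Icc_of_monotoneOn ?_ (Real.continuous_rpow_const hα.le).continuousOn
    fun a ha => hrv.tendsto_scaledTail_div hα ha.1
  filter_upwards [eventually_gt_atTop 0] with u hu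
  exact ((monotone_scaledTail ht ht_pos hu).div_const (ht_pos u hu).le).monotoneOn _

lemma integrable_scaledTail {μ : Measure ℝ} [IsFiniteMeasure μ] (ht : Antitone t)
    (ht_pos : ∀ u, 0 < u → 0 < t u) (ht_le : ∀ x, t x ≤ 1) {u : ℝ} (hu : 0 < u) :
    Integrable (scaledTail t u) μ := by
  refine .of_bound (monotone_scaledTail ht ht_pos hu).measurable.aestronglyMeasurable 1
    (ae_of_all _ fun a => ?_)
  unfold scaledTail
  split_ifs with ha
  · rw [Real.norm_eq_abs, abs_of_pos (ht_pos _ (div_pos hu ha))]; exact ht_le _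
  · simp

lemma abs_scaledTail_div_sub_rpow_le {K β γ M u a : ℝ} (hαβ : α ≤ β) (hβγ : β ≤ γ) (hK0 : 0 ≤ K)
    (hK : t (u / a) ≤ K * a ^ β * t u) (htu : 0 < t u) (htua : 0 ≤ t (u / a)) (hM : 1 ≤ M)
    (ha : M ≤ a) : |scaledTail t u a / t u - a ^ α| ≤ (K + 1) * M ^ (β - γ) * a ^ γ := by
  have hapos : 0 < a := by linarith
  have hle : t (u / a) / t u ≤ K * a ^ β := (div_le_iff₀ htu).mpr hK
  have hnn : 0 ≤ t (u / a) / t u := div_nonneg htua htu.le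
  have hαβ' : a ^ α ≤ a ^ β := Real.rpow_le_rpow_of_exponent_le (by linarith) hαβ
  have hα0 : 0 ≤ a ^ α := Real.rpow_nonneg hapos.le α
  have hβγ' : a ^ β ≤ M ^ (β - γ) * a ^ γ :=
    calc a ^ β = a ^ (β - γ) * a ^ γ := by rw [← Real.rpow_add hapos, sub_add_cancel]
      _ ≤ M ^ (β - γ) * a ^ γ := by
        gcongr ?_ * _
        exact Real.rpow_le_rpow_of_nonpos (by linarith) ha (by linarith)
  calc |scaledTail t u a / t u - a ^ α| ≤ (K + 1) * a ^ β := by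
        rw [scaledTail, if_pos hapos, abs_le]; constructor <;> linarith
    _ ≤ (K + 1) * M ^ (β - γ) * a ^ γ := by rw [mul_assoc]; gcongr

theorem RegularlyVarying.eventually_abs_integral_scaledTail_div_sub_le
    (hrv : RegularlyVarying t (-α)) (hα : 0 < α) (ht : Antitone t)
    (ht_pos : ∀ u, 0 < u → 0 < t u) (ht_le : ∀ x, t x ≤ 1) {ε : ℝ} (hε : 0 < ε) (C : ℝ)
    {δ : ℝ} (hδ : 0 < δ) :
    ∀ᶠ u in atTop, ∀ μ : Measure ℝ, IsProbabilityMeasure μ → (∀ᵐ a ∂μ, 0 ≤ a) →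
      Integrable (fun a : ℝ => a ^ (α + ε)) μ → ∫ a, a ^ (α + ε) ∂μ ≤ C →
      |(∫ a, scaledTail t u a ∂μ) / t u - ∫ a, a ^ α ∂μ| ≤ δ := by
  obtain ⟨K, hK0, hK⟩ := exists_potter_bound ht ht_pos ht_le (by positivity : 0 ≤ α + ε / 2)
    (hrv.eventually_div_two_le ht_pos (by linarith : α < α + ε / 2))
  set c : ℝ → ℝ := fun M => (K + 1) * M ^ (-(ε / 2))
  obtain ⟨M, hM, hMC⟩ : ∃ M, 1 ≤ M ∧ c M * C ≤ δ / 2 := by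
    have : Tendsto (fun M => c M * C) atTop (𝓝 0) := by
      simpa using ((tendsto_rpow_neg_atTop (half_pos hε)).const_mul (K + 1)).mul_const C
    obtain ⟨M, hM⟩ := ((this.eventually_le_const (half_pos hδ)).and (eventually_ge_atTop 1)).exists
    exact ⟨M, hM.2, hM.1⟩
  have hnear := Metric.tendstoUniformlyOn_iff.mp
    (hrv.tendstoUniformlyOn_scaledTail_div hα ht ht_pos M) _ (half_pos hδ)
  filter_upwards [hK, hnear, eventually_gt_atTop 0] with u hK hnear hu μ _ hμ hγ hC
  have htu := ht_pos u hu
  have hbound : ∀ᵐ a ∂μ, |scaledTail t u a / t u - a ^ α| ≤ δ / 2 + c M * a ^ (α + ε) := by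
    filter_upwards [hμ] with a ha
    have hc : 0 ≤ c M * a ^ (α + ε) := by positivity
    rcases le_or_gt a M with haM | haM
    · have := hnear a ⟨ha, haM⟩
      rw [Real.dist_eq, abs_sub_comm] at this
      linarith
    · have := abs_scaledTail_div_sub_rpow_le (α := α) (γ := α + ε) (by linarith) (by linarith) hK0
        (hK a (hM.trans haM.le)) htu (ht_pos _ (div_pos hu (by linarith))).le hM haM.le
      rw [show α + ε / 2 - (α + ε) = -(ε / 2) by ring] at this
      simp only [c]; linarith
  calc |(∫ a, scaledTail t u a ∂μ) / t u - ∫ a, a ^ α ∂μ|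
      = |∫ a, scaledTail t u a / t u ∂μ - ∫ a, a ^ α ∂μ| := by rw [integral_div]
    _ ≤ δ / 2 + ∫ a, c M * a ^ (α + ε) ∂μ :=
      abs_integral_sub_integral_le ((integrable_scaledTail ht ht_pos ht_le hu).div_const _)
        (integrable_rpow_of_le hμ hα.le (by linarith) hγ) (hγ.const_mul _) hbound
    _ = δ / 2 + c M * ∫ a, a ^ (α + ε) ∂μ := by rw [integral_const_mul]
    _ ≤ δ / 2 + c M * C := by gcongr
    _ ≤ δ := by linarith

end ScaledTail

section LeftTail

variable {Ω : Type*} {m0 : MeasurableSpace Ω} {P : Measure Ω} {Z : Ω → ℝ}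

noncomputable def leftTail (P : Measure Ω) (Z : Ω → ℝ) (u : ℝ) : ℝ := (P {ω | Z ω < -u}).toReal

lemma antitone_leftTail [IsFiniteMeasure P] : Antitone (leftTail P Z) := fun _ v huv =>
  ENNReal.toReal_mono (measure_ne_top _ _)
    (measure_mono fun ω (h : Z ω < -v) => h.trans_le (neg_le_neg huv))

lemma leftTail_le_one [IsProbabilityMeasure P] (u : ℝ) : leftTail P Z u ≤ 1 :=
  measureReal_le_one

lemma ProbabilityTheory.IndepFun.toReal_measure_mul_lt_neg_eq_integral_scaledTail
    [IsFiniteMeasure P] {A : Ω → ℝ} (hind : IndepFun A Z P) (hA : Measurable A)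
    (hZ : Measurable Z) (hA0 : ∀ᵐ ω ∂P, 0 ≤ A ω) {u : ℝ} (hu : 0 ≤ u) :
    (P {ω | A ω * Z ω < -u}).toReal = ∫ a, scaledTail (leftTail P Z) u a ∂(P.map A) := by
  set S := {p : ℝ × ℝ | p.1 * p.2 < -u}
  have hS : MeasurableSet S := measurableSet_lt (measurable_fst.mul measurable_snd) measurable_const
  have hsection : ∀ᵐ a ∂(P.map A),
      ((P.map Z) (Prod.mk a ⁻¹' S)).toReal = scaledTail (leftTail P Z) u a := by
    filter_upwards [(ae_map_iff hA.aemeasurable measurableSet_Ici).mpr hA0] with a (ha : 0 ≤ a)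
    rw [Measure.map_apply hZ (measurable_prodMk_left hS), scaledTail, leftTail]
    split_ifs with ha'
    · congr 2; ext ω
      change a * Z ω < -u ↔ Z ω < -(u / a)
      rw [← neg_div, lt_div_iff₀ ha', mul_comm]
    · simp [S, le_antisymm (not_lt.mp ha') ha, not_lt.mpr hu]
  calc (P {ω | A ω * Z ω < -u}).toReal = (P.map (fun ω => (A ω, Z ω)) S).toReal := by
        rw [Measure.map_apply (hA.prodMk hZ) hS]; rfl
    _ = (∫⁻ a, P.map Z (Prod.mk a ⁻¹' S) ∂(P.map A)).toReal := by
        rw [(indepFun_iff_map_prod_eq_prod_map_map hA.aemeasurable hZ.aemeasurable).mp hind,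
          Measure.prod_apply hS]
    _ = ∫ a, ((P.map Z) (Prod.mk a ⁻¹' S)).toReal ∂(P.map A) :=
        (integral_toReal (measurable_measure_prodMk_left hS).aemeasurable
          (ae_of_all _ fun _ => measure_lt_top _ _)).symm
    _ = ∫ a, scaledTail (leftTail P Z) u a ∂(P.map A) := integral_congr_ae hsection

end LeftTail

theorem uniform_breiman_general
    {Ω : Type*} {m0 : MeasurableSpace Ω} {P : Measure Ω} [IsProbabilityMeasure P]
    (α : ℝ) (hα : 0 < α)
    (Z : Ω → ℝ) (hZmeas : Measurable Z)
    (hZpos : ∀ u : ℝ, 0 < u → 0 < P {ω | Z ω < -u})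
    (hZrv : ∀ lam : ℝ, 0 < lam →
      Tendsto (fun u : ℝ =>
          (P {ω | Z ω < -(lam * u)}).toReal / (P {ω | Z ω < -u}).toReal)
        atTop (nhds (lam ^ (-α))))
    {I : Type*} (A : I → Ω → ℝ)
    (hAmeas : ∀ i, Measurable (A i))
    (hAnonneg : ∀ i, ∀ ω, 0 ≤ A i ω)
    (hAindep : ∀ i, IndepFun (A i) Z P)
    (ε C : ℝ) (hε : 0 < ε)
    (hmom : ∀ i, ∫⁻ ω, ENNReal.ofReal ((A i ω) ^ (α + ε)) ∂P ≤ ENNReal.ofReal C) :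
    ∀ δ : ℝ, 0 < δ → ∃ u₀ : ℝ, ∀ u ≥ u₀, ∀ i : I,
      |(P {ω | A i ω * Z ω < -u}).toReal / (P {ω | Z ω < -u}).toReal
          - ∫ ω, (A i ω) ^ α ∂P| ≤ δ := by
  intro δ hδ
  have hrv : RegularlyVarying (leftTail P Z) (-α) := hZrv
  have htail_pos (u : ℝ) (hu : 0 < u) : 0 < leftTail P Z u :=
    ENNReal.toReal_pos (hZpos u hu).ne' (measure_ne_top _ _)
  obtain ⟨u₀, hu₀⟩ := eventually_atTop.mp ((eventually_ge_atTop 0).and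
    (hrv.eventually_abs_integral_scaledTail_div_sub_le hα antitone_leftTail htail_pos
      leftTail_le_one hε (ENNReal.ofReal C).toReal hδ))
  refine ⟨u₀, fun u hu i => ?_⟩
  obtain ⟨hu0, hbound⟩ := hu₀ u hu
  have hA : AEMeasurable (A i) P := (hAmeas i).aemeasurable
  have hlaw0 : ∀ᵐ a ∂(P.map (A i)), 0 ≤ a :=
    (ae_map_iff hA measurableSet_Ici).mpr (ae_of_all _ (hAnonneg i))
  have hmoment := integrable_and_integral_le_of_lintegral_le
    (measurable_id'.pow_const (α + ε)).aestronglyMeasurable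
    (hlaw0.mono fun a ha => Real.rpow_nonneg ha _) ENNReal.ofReal_ne_top
    ((lintegral_map (measurable_id'.pow_const _).ennreal_ofReal (hAmeas i)).trans_le (hmom i))
  rw [(hAindep i).toReal_measure_mul_lt_neg_eq_integral_scaledTail (hAmeas i) hZmeas
    (ae_of_all _ (hAnonneg i)) hu0,
    ← integral_map hA (measurable_id'.pow_const α).aestronglyMeasurable]
  exact hbound _ (Measure.isProbabilityMeasure_map hA) hlaw0 hmoment.1 hmoment.2

/-- Uniform version of Breiman's lemma: if the left tail of `Z` is regularly varying
with index `-α`, and `(A_i)_{i ∈ I}` is a family of nonnegative random variables, each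
independent of `Z`, with `E[A_i^{α+ε}] ≤ C` uniformly, then
`P(A_i Z < -u)/P(Z < -u) → E[A_i^α]` uniformly in `i` as `u → ∞`. -/
theorem uniform_breiman
    {Ω : Type*} {m0 : MeasurableSpace Ω} {P : Measure Ω} [IsProbabilityMeasure P]
    (α : ℝ) (hα : 0 < α)
    (Z : Ω → ℝ) (hZmeas : Measurable Z)
    (hZpos : ∀ u : ℝ, 0 < u → 0 < P {ω | Z ω < -u})
    (hZrv : ∀ lam : ℝ, 0 < lam →
      Tendsto (fun u : ℝ =>
          (P {ω | Z ω < -(lam * u)}).toReal / (P {ω | Z ω < -u}).toReal)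
        atTop (nhds (lam ^ (-α))))
    {I : Type*} [Nonempty I] (A : I → Ω → ℝ)
    (hAmeas : ∀ i, Measurable (A i))
    (hAnonneg : ∀ i, ∀ ω, 0 ≤ A i ω)
    (hAindep : ∀ i, IndepFun (A i) Z P)
    (ε C : ℝ) (hε : 0 < ε)
    (hmom : ∀ i, ∫⁻ ω, ENNReal.ofReal ((A i ω) ^ (α + ε)) ∂P ≤ ENNReal.ofReal C) :
    ∀ δ : ℝ, 0 < δ → ∃ u₀ : ℝ, ∀ u ≥ u₀, ∀ i : I,
      |(P {ω | A i ω * Z ω < -u}).toReal / (P {ω | Z ω < -u}).toReal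
          - ∫ ω, (A i ω) ^ α ∂P| ≤ δ :=
  uniform_breiman_general (m0 := m0) α hα Z hZmeas hZpos hZrv A hAmeas hAnonneg hAindep ε C hε hmom
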